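/- Let G be the complete directed graph on a finite vertex set V with |V| ≥ 2, and let P be a set of edges of G such that in P every vertex has in-degree at most 1 and out-degree at most 1, and P contains no directed cycle (i.e., P is a vertex-disjoint union of simple directed paths, possibly together with isolated vertices). Then there exists a Hamiltonian cycle T of G with P ⊆ T. Consequently, for any edge weights w : E → {0,1}, there exists a Hamiltonian cycle T with w(T) ≥ w(P). -/

import Mathlib

open Finset

/-- `T` is a Hamiltonian cycle (tour) of the complete directed graph on `V`. -/
def IsHamCycle {V : Type*} [Fintype V] [DecidableEq V] (T : Finset (V × V)) : Prop :=
  ∃ σ : Equiv.Perm V, σ.IsCycle ∧ σ.support = Finset.univ ∧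
    T = Finset.univ.image (fun v => (v, σ v))

/-- Out-degree of `v` in the edge set `P`. -/
def outdeg {V : Type*} [DecidableEq V] (P : Finset (V × V)) (v : V) : ℕ :=
  (P.filter fun e => e.1 = v).card

/-- In-degree of `v` in the edge set `P`. -/
def indeg {V : Type*} [DecidableEq V] (P : Finset (V × V)) (v : V) : ℕ :=
  (P.filter fun e => e.2 = v).card

/-- `P` is a vertex-disjoint union of simple directed paths: every vertex has
in-degree ≤ 1 and out-degree ≤ 1 and there is no directed cycle (every
subset in which all vertices are balanced is empty). -/
def IsPathSystem {V : Type*} [DecidableEq V] (P : Finset (V × V)) : Prop :=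
  (∀ v, outdeg P v ≤ 1) ∧ (∀ v, indeg P v ≤ 1) ∧
  ∀ T ⊆ P, (∀ v, outdeg T v = indeg T v) → T = ∅

/-! Some edge `(u, v)` of a nonempty path system has a tail `u` without incoming edge: otherwise
out-degree ≤ in-degree everywhere, and since both sum to `#P`, `P` would be balanced, hence empty.
Ordering the other vertices inductively and placing `u` right before `v` gives a list in which every
edge of `P` joins consecutive entries; the cyclic permutation `List.formPerm` of that list is the
required tour. -/

namespace List

variable {α : Type*}

theorem formPerm_apply_of_infix [DecidableEq α] {l : List α} (hl : l.Nodup) {x y : α}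
    (h : [x, y] <:+: l) : l.formPerm x = y := by
  obtain ⟨s, t, rfl⟩ := h
  rw [← formPerm_rotate _ hl s.length, append_assoc, rotate_append_length_eq]
  exact formPerm_apply_head x y _ (perm_append_comm.nodup_iff.mp (by rwa [append_assoc] at hl))

theorem infix_cons_append_of_infix_append_cons {x y v : α} {a b : List α}
    (h : [x, y] <:+: a ++ v :: b) (hy : y ≠ v) : [x, y] <:+: v :: b ++ a := by
  rcases infix_append_iff.mp h with h | h | ⟨l₁, l₂, hl, h₁, h₂⟩
  · exact h.trans (suffix_append _ _).isInfix
  · exact h.trans (prefix_append _ _).isInfix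
  · rcases l₁ with _ | ⟨x', _ | ⟨y', _ | _⟩⟩
    · simp only [nil_append] at hl
      exact hl ▸ h₂.isInfix.trans (prefix_append _ _).isInfix
    · obtain ⟨rfl, rfl⟩ : x' = x ∧ l₂ = [y] := by simpa using hl.symm
      exact absurd (by simpa using h₂) hy
    · obtain ⟨rfl, rfl, rfl⟩ : x' = x ∧ y' = y ∧ l₂ = [] := by simpa using hl.symm
      exact h₁.isInfix.trans (suffix_append _ _).isInfix
    · simp at hl

end List

section PathSystem

variable {V : Type*} [DecidableEq V] {P Q : Finset (V × V)}

theorem sum_outdeg [Fintype V] (P : Finset (V × V)) : ∑ v, outdeg P v = #P :=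
  (card_eq_sum_card_fiberwise fun _ _ => mem_univ _).symm

theorem sum_indeg [Fintype V] (P : Finset (V × V)) : ∑ v, indeg P v = #P :=
  (card_eq_sum_card_fiberwise fun _ _ => mem_univ _).symm

theorem IsPathSystem.mono (hP : IsPathSystem P) (hQ : Q ⊆ P) : IsPathSystem Q :=
  ⟨fun v => (card_le_card (filter_subset_filter _ hQ)).trans (hP.1 v),
    fun v => (card_le_card (filter_subset_filter _ hQ)).trans (hP.2.1 v),
    fun T hT => hP.2.2 T (hT.trans hQ)⟩

theorem IsPathSystem.fst_injOn (hP : IsPathSystem P) : Set.InjOn Prod.fst (P : Set (V × V)) :=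
  fun e he e' he' h => card_le_one.mp (hP.1 e.1) e (mem_filter.mpr ⟨he, rfl⟩) e'
    (mem_filter.mpr ⟨he', h.symm⟩)

theorem IsPathSystem.snd_injOn (hP : IsPathSystem P) : Set.InjOn Prod.snd (P : Set (V × V)) :=
  fun e he e' he' h => card_le_one.mp (hP.2.1 e.2) e (mem_filter.mpr ⟨he, rfl⟩) e'
    (mem_filter.mpr ⟨he', h.symm⟩)

theorem IsPathSystem.exists_source [Fintype V] (hP : IsPathSystem P) (hne : P.Nonempty) :
    ∃ e ∈ P, indeg P e.1 = 0 := by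
  by_contra! hsrc
  have hle : ∀ v ∈ univ, outdeg P v ≤ indeg P v := by
    intro v _
    rcases (filter (fun e : V × V => e.1 = v) P).eq_empty_or_nonempty with h | ⟨e, he⟩
    · simp [outdeg, h]
    · obtain ⟨heP, rfl⟩ := mem_filter.mp he
      exact (hP.1 _).trans (Nat.one_le_iff_ne_zero.mpr (hsrc e heP))
  have hbal := (sum_eq_sum_iff_of_le hle).mp (by rw [sum_outdeg, sum_indeg])
  exact hne.ne_empty (hP.2.2 P subset_rfl fun v => hbal v (mem_univ v))

/-- After removing the edge `(u, v)`, no edge enters `v`, so rotating an ordering of the rest to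
start at `v` keeps all its edges consecutive. -/
theorem IsPathSystem.exists_list [Fintype V] (hP : IsPathSystem P) (S : Finset V)
    (hS : ∀ e ∈ P, e.1 ∈ S ∧ e.2 ∈ S) :
    ∃ l : List V, l.Nodup ∧ l.toFinset = S ∧ ∀ e ∈ P, [e.1, e.2] <:+: l := by
  induction P using Finset.strongInduction generalizing S with
  | H P ih =>
  rcases P.eq_empty_or_nonempty with rfl | hne
  · exact ⟨S.toList, S.nodup_toList, S.toList_toFinset, by simp⟩
  obtain ⟨⟨u, v⟩, huv, hu⟩ := hP.exists_source hne
  have hnot_in_u : ∀ e ∈ P, e.2 ≠ u := fun e he h =>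
    notMem_empty e ((card_eq_zero.mp hu).subset (mem_filter.mpr ⟨he, h⟩))
  have hrest : ∀ e ∈ P.erase (u, v), e.1 ≠ u ∧ e.2 ≠ u ∧ e.2 ≠ v := by
    intro e he
    obtain ⟨hne, heP⟩ := mem_erase.mp he
    exact ⟨fun h => hne (IsPathSystem.fst_injOn hP heP huv h), hnot_in_u e heP,
      fun h => hne (IsPathSystem.snd_injOn hP heP huv h)⟩
  obtain ⟨l, hnd, hl, hthread⟩ := ih _ (erase_ssubset huv) (hP.mono (erase_subset _ _))
    (S.erase u) fun e he => ⟨mem_erase.mpr ⟨(hrest e he).1, (hS e (erase_subset _ _ he)).1⟩,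
      mem_erase.mpr ⟨(hrest e he).2.1, (hS e (erase_subset _ _ he)).2⟩⟩
  have hvu : v ≠ u := hnot_in_u _ huv
  have hv : v ∈ l := by
    rw [← List.mem_toFinset, hl]
    exact mem_erase.mpr ⟨hvu, (hS _ huv).2⟩
  have hu_notin : u ∉ l := by
    rw [← List.mem_toFinset, hl]
    exact notMem_erase u S
  obtain ⟨a, b, rfl⟩ := List.append_of_mem hv
  have hperm : (v :: b ++ a).Perm (a ++ v :: b) := List.perm_append_comm
  refine ⟨u :: (v :: b ++ a), ?_, ?_, ?_⟩
  · exact List.nodup_cons.mpr ⟨hperm.mem_iff.not.mpr hu_notin, hperm.nodup_iff.mpr hnd⟩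
  · rw [List.toFinset_cons, List.toFinset_eq_of_perm _ _ hperm, hl,
      insert_erase (hS _ huv).1]
  · intro e he
    by_cases he' : e = (u, v)
    · subst he'
      exact List.prefix_append _ _ |>.isInfix
    · have he'' : e ∈ P.erase (u, v) := mem_erase.mpr ⟨he', he⟩
      exact List.infix_cons (List.infix_cons_append_of_infix_append_cons (hthread e he'')
        (hrest e he'').2.2)

end PathSystem

theorem isHamCycle_image_formPerm {V : Type*} [Fintype V] [DecidableEq V] {l : List V}
    (hnd : l.Nodup) (hl : l.toFinset = univ) (h2 : 2 ≤ Fintype.card V) :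
    IsHamCycle (univ.image fun v => (v, l.formPerm v)) := by
  have hlen : 2 ≤ l.length := by rwa [← List.toFinset_card_of_nodup hnd, hl]
  refine ⟨l.formPerm, List.isCycle_formPerm hnd hlen, ?_, rfl⟩
  rw [List.support_formPerm_of_nodup l hnd fun x hx => by simp [hx] at hlen, hl]

theorem stmt10_general {V : Type*} [Fintype V] [DecidableEq V]
    (h2 : 2 ≤ Fintype.card V)
    (P : Finset (V × V)) (hP : IsPathSystem P) :
    (∃ T : Finset (V × V), IsHamCycle T ∧ P ⊆ T) ∧
    (∀ w : V × V → ℕ, (∀ e : V × V, w e ≤ 1) →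
      ∃ T : Finset (V × V), IsHamCycle T ∧ ∑ e ∈ P, w e ≤ ∑ e ∈ T, w e) := by
  obtain ⟨l, hnd, hl, hthread⟩ := hP.exists_list univ fun _ _ => ⟨mem_univ _, mem_univ _⟩
  have hT := isHamCycle_image_formPerm hnd hl h2
  have hPT : P ⊆ univ.image fun v => (v, l.formPerm v) := fun e he =>
    mem_image.mpr ⟨e.1, mem_univ _, by rw [List.formPerm_apply_of_infix hnd (hthread e he)]⟩
  exact ⟨⟨_, hT, hPT⟩, fun w _ => ⟨_, hT, sum_le_sum_of_subset hPT⟩⟩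

/-- Patching: for `|V| ≥ 2`, every vertex-disjoint union of simple directed paths
`P` in the complete directed graph extends to a Hamiltonian cycle `T ⊇ P`;
consequently for any 0/1 weights there is a Hamiltonian cycle of weight at
least `w(P)`. -/
theorem stmt10 {V : Type*} [Fintype V] [DecidableEq V]
    (h2 : 2 ≤ Fintype.card V)
    (P : Finset (V × V)) (hP0 : ∀ e ∈ P, e.1 ≠ e.2) (hP : IsPathSystem P) :
    (∃ T : Finset (V × V), IsHamCycle T ∧ P ⊆ T) ∧
    (∀ w : V × V → ℕ, (∀ e : V × V, w e ≤ 1) →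
      ∃ T : Finset (V × V), IsHamCycle T ∧ ∑ e ∈ P, w e ≤ ∑ e ∈ T, w e) :=
  stmt10_general h2 P hP
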